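/- arXiv:1510.03641 — 3 statements merged into one kernel-verified Lean document; each statement's English description precedes it below -/
import Mathlib

section
/- For any η > 0 and any t, x ∈ ℝ, the integral ∫_ℝ e^{2πiux} (1 - e^{-2πiut}) · e^{-2πη|u|}/(2|u|) du equals (1/2) log( ((x-t)² + η²)/(x² + η²) ). -/
/-!
Pairing `u` with `-u` turns the integrand on `(0, ∞)` into
`(cos (2πxu) - cos (2π(x-t)u)) e^{-2πηu} / u`, a difference of two Frullani integrals
`J(a) = ∫₀^∞ (cos (au) - 1) e^{-cu} / u du`. Differentiating under the integral sign,
`J'(a) = -∫₀^∞ e^{-cu} sin (au) du = -a / (c² + a²)`, the imaginary part of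
`∫₀^∞ e^{(-c + ia)u} du = 1 / (c - ia)`; as `J(0) = 0`, `J(a) = -½ log ((c² + a²) / c²)`.
-/

open Real MeasureTheory Set Filter

section Frullani

variable {c : ℝ}

theorem integrableOn_Ioi_cos_sub_one_mul_exp_neg_div (hc : 0 < c) (a : ℝ) :
    IntegrableOn (fun u => (cos (a * u) - 1) * exp (-c * u) / u) (Ioi 0) := by
  refine ((exp_neg_integrableOn_Ioi 0 hc).const_mul |a|).mono'
    (by fun_prop : Measurable _).aestronglyMeasurable ?_
  filter_upwards [ae_restrict_mem measurableSet_Ioi] with u (hu : 0 < u)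
  have hcos : |cos (a * u) - 1| ≤ |a| * u := by
    simpa [abs_mul, abs_of_pos hu] using abs_cos_sub_cos_le (a * u) 0
  rw [norm_div, norm_mul, norm_of_nonneg (exp_pos _).le, norm_of_nonneg hu.le, div_le_iff₀ hu]
  calc ‖cos (a * u) - 1‖ * exp (-c * u) ≤ |a| * u * exp (-c * u) := by gcongr; exact hcos
    _ = |a| * exp (-c * u) * u := by ring

theorem integral_Ioi_exp_neg_mul_mul_sin (hc : 0 < c) (a : ℝ) :
    ∫ u in Ioi 0, exp (-c * u) * sin (a * u) = a / (c ^ 2 + a ^ 2) := by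
  have hre : (-c + a * Complex.I).re < 0 := by simpa using hc
  have h := congrArg Complex.im (integral_exp_mul_complex_Ioi hre 0)
  rw [← Complex.imCLM_apply,
    ← Complex.imCLM.integral_comp_comm (integrableOn_exp_mul_complex_Ioi hre 0)] at h
  convert h using 1
  · refine setIntegral_congr_fun measurableSet_Ioi fun u _ => ?_
    simp [Complex.exp_im]
  · have : Complex.normSq (-c + a * Complex.I) = c ^ 2 + a ^ 2 := by
      simpa using Complex.normSq_add_mul_I (-c) a
    simp [this, neg_div]

theorem hasDerivAt_integral_Ioi_cos_sub_one_mul_exp_neg_div (hc : 0 < c) (a : ℝ) :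
    HasDerivAt (fun a => ∫ u in Ioi 0, (cos (a * u) - 1) * exp (-c * u) / u)
      (-(a / (c ^ 2 + a ^ 2))) a := by
  have hF' : ∫ u in Ioi 0, -(exp (-c * u) * sin (a * u)) = -(a / (c ^ 2 + a ^ 2)) := by
    rw [integral_neg, integral_Ioi_exp_neg_mul_mul_sin hc]
  rw [← hF']
  refine (hasDerivAt_integral_of_dominated_loc_of_deriv_le (μ := volume.restrict (Ioi 0))
    (F := fun a u => (cos (a * u) - 1) * exp (-c * u) / u)
    (F' := fun a u => -(exp (-c * u) * sin (a * u))) (bound := fun u => exp (-c * u))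
    univ_mem (.of_forall fun _ => (by fun_prop : Measurable _).aestronglyMeasurable)
    (integrableOn_Ioi_cos_sub_one_mul_exp_neg_div hc a)
    (by fun_prop : Measurable _).aestronglyMeasurable ?_ (exp_neg_integrableOn_Ioi 0 hc) ?_).2
  · refine .of_forall fun _ _ _ => ?_
    rw [norm_neg, norm_mul, norm_of_nonneg (exp_pos _).le]
    exact mul_le_of_le_one_right (exp_pos _).le (abs_sin_le_one _)
  · filter_upwards [ae_restrict_mem measurableSet_Ioi] with u (hu : 0 < u) b _
    refine ((((hasDerivAt_mul_const u).cos.sub_const 1).mul_const (exp (-c * u))).div_const u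
      ).congr_deriv ?_
    field_simp

theorem integral_Ioi_cos_sub_one_mul_exp_neg_div (hc : 0 < c) (a : ℝ) :
    ∫ u in Ioi 0, (cos (a * u) - 1) * exp (-c * u) / u =
      -(1 / 2) * log ((c ^ 2 + a ^ 2) / c ^ 2) := by
  have hlog (b : ℝ) : HasDerivAt (fun b => -(1 / 2) * log ((c ^ 2 + b ^ 2) / c ^ 2))
      (-(b / (c ^ 2 + b ^ 2))) b := by
    have hpos : 0 < (c ^ 2 + b ^ 2) / c ^ 2 := by positivity
    refine ((((hasDerivAt_pow 2 b).const_add (c ^ 2)).div_const (c ^ 2)).log hpos.ne'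
      |>.const_mul (-(1 / 2))).congr_deriv ?_
    field_simp
    ring
  have hconst := is_const_of_deriv_eq_zero
    (fun b => ((hasDerivAt_integral_Ioi_cos_sub_one_mul_exp_neg_div hc b).sub
      (hlog b)).differentiableAt)
    (fun b => ((hasDerivAt_integral_Ioi_cos_sub_one_mul_exp_neg_div hc b).sub
      (hlog b)).deriv.trans (sub_self _)) a 0
  simpa [hc.ne', add_eq_zero_iff_eq_neg] using hconst

end Frullani

theorem integral_eq_integral_Ioi_comp_neg_add {E : Type*} [NormedAddCommGroup E]
    [NormedSpace ℝ E] {f : ℝ → E} (hf : Integrable f) :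
    ∫ u, f u = ∫ u in Ioi 0, (f (-u) + f u) := by
  rw [integral_add hf.comp_neg.integrableOn hf.integrableOn, integral_comp_neg_Ioi, neg_zero,
    intervalIntegral.integral_Iic_add_Ioi hf.integrableOn hf.integrableOn]

theorem integrable_exp_neg_mul_abs {c : ℝ} (hc : 0 < c) :
    Integrable fun u : ℝ => exp (-c * |u|) := by
  refine (Continuous.locallyIntegrable (by fun_prop))
    |>.integrable_of_isBigO_atTop_of_norm_isNegInvariant (g := fun u => exp (-c * u))
    (.of_forall fun u => by simp) ?_ ?_
  · refine EventuallyEq.isBigO ?_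
    filter_upwards [eventually_ge_atTop 0] with u hu
    rw [abs_of_nonneg hu]
  · exact integrableAtFilter_atTop_iff.2
      ⟨0, (integrableOn_Ici_iff_integrableOn_Ioi).2 (exp_neg_integrableOn_Ioi 0 hc)⟩

theorem cexp_neg_mul_I_mul_one_sub_cexp_add (α β : ℝ) :
    Complex.exp (-(α * Complex.I)) * (1 - Complex.exp (β * Complex.I)) +
        Complex.exp (α * Complex.I) * (1 - Complex.exp (-(β * Complex.I))) =
      2 * (cos α - cos (α - β) : ℝ) := by
  have h₁ : Complex.exp ((α - β) * Complex.I) =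
      Complex.exp (α * Complex.I) * Complex.exp (-(β * Complex.I)) := by
    rw [← Complex.exp_add]; ring_nf
  have h₂ : Complex.exp (-(α - β) * Complex.I) =
      Complex.exp (-(α * Complex.I)) * Complex.exp (β * Complex.I) := by
    rw [← Complex.exp_add]; ring_nf
  push_cast
  rw [Complex.cos, Complex.cos, h₁, h₂, neg_mul]
  ring

noncomputable def frullaniFourierIntegrand (η t x u : ℝ) : ℂ :=
  Complex.exp (((2 * π * u * x : ℝ) : ℂ) * Complex.I) *
    (1 - Complex.exp (-(((2 * π * u * t : ℝ) : ℂ) * Complex.I))) *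
    ((Real.exp (-(2 * π * η * |u|)) / (2 * |u|) : ℝ) : ℂ)

theorem norm_frullaniFourierIntegrand_le (η t x u : ℝ) :
    ‖frullaniFourierIntegrand η t x u‖ ≤ π * |t| * exp (-(2 * π * η) * |u|) := by
  rcases eq_or_ne u 0 with rfl | hu
  · simp only [frullaniFourierIntegrand, abs_zero, mul_zero, div_zero, Complex.ofReal_zero,
      norm_zero]
    positivity
  have hdiff :
      ‖1 - Complex.exp (-(((2 * π * u * t : ℝ) : ℂ) * Complex.I))‖ ≤ 2 * π * |u| * |t| := by
    rw [norm_sub_rev, ← neg_mul, mul_comm, ← Complex.ofReal_neg]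
    refine norm_exp_I_mul_ofReal_sub_one_le.trans_eq ?_
    simp [pi_pos.le]
  rw [frullaniFourierIntegrand, norm_mul, norm_mul, Complex.norm_exp_ofReal_mul_I, one_mul,
    Complex.norm_real, norm_of_nonneg (by positivity)]
  calc _ ≤ 2 * π * |u| * |t| * (exp (-(2 * π * η * |u|)) / (2 * |u|)) := by gcongr
    _ = π * |t| * exp (-(2 * π * η) * |u|) := by field_simp

theorem integrable_frullaniFourierIntegrand {η : ℝ} (hη : 0 < η) (t x : ℝ) :
    Integrable (frullaniFourierIntegrand η t x) :=
  ((integrable_exp_neg_mul_abs (by positivity)).const_mul _).mono'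
    (by unfold frullaniFourierIntegrand; fun_prop : Measurable _).aestronglyMeasurable
    (.of_forall fun u => norm_frullaniFourierIntegrand_le η t x u)

theorem frullaniFourierIntegrand_neg_add (η t x : ℝ) {u : ℝ} (hu : 0 < u) :
    frullaniFourierIntegrand η t x (-u) + frullaniFourierIntegrand η t x u =
      ((cos (2 * π * x * u) - 1) * exp (-(2 * π * η) * u) / u -
        (cos (2 * π * (x - t) * u) - 1) * exp (-(2 * π * η) * u) / u : ℝ) := by
  simp only [frullaniFourierIntegrand, abs_neg, abs_of_pos hu]
  rw [show 2 * π * -u * x = -(2 * π * u * x) by ring,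
    show 2 * π * -u * t = -(2 * π * u * t) by ring,
    Complex.ofReal_neg, Complex.ofReal_neg, neg_mul, neg_mul, neg_neg, ← add_mul,
    cexp_neg_mul_I_mul_one_sub_cexp_add,
    show 2 * π * u * x - 2 * π * u * t = 2 * π * (x - t) * u by ring, mul_right_comm _ u x]
  push_cast
  field_simp
  ring

/-- Frullani-type Fourier identity: for η > 0 and t, x ∈ ℝ,
∫_ℝ e^{2πiux}(1 - e^{-2πiut}) e^{-2πη|u|}/(2|u|) du
  = (1/2) log(((x-t)² + η²)/(x² + η²)). -/
theorem frullani_fourier_identity (η t x : ℝ) (hη : 0 < η) :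
    ∫ u : ℝ,
        Complex.exp (((2 * π * u * x : ℝ) : ℂ) * Complex.I) *
          (1 - Complex.exp (-(((2 * π * u * t : ℝ) : ℂ) * Complex.I))) *
          ((Real.exp (-(2 * π * η * |u|)) / (2 * |u|) : ℝ) : ℂ)
      = (((1 / 2) * Real.log (((x - t) ^ 2 + η ^ 2) / (x ^ 2 + η ^ 2)) : ℝ) : ℂ) := by
  have hc : 0 < 2 * π * η := by positivity
  have hsymm := integral_eq_integral_Ioi_comp_neg_add (integrable_frullaniFourierIntegrand hη t x)
  rw [setIntegral_congr_fun measurableSet_Ioi fun _ hu => frullaniFourierIntegrand_neg_add η t x hu,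
    integral_complex_ofReal, integral_sub (integrableOn_Ioi_cos_sub_one_mul_exp_neg_div hc _)
      (integrableOn_Ioi_cos_sub_one_mul_exp_neg_div hc _),
    integral_Ioi_cos_sub_one_mul_exp_neg_div hc, integral_Ioi_cos_sub_one_mul_exp_neg_div hc]
    at hsymm
  refine hsymm.trans (congrArg _ ?_)
  have hscale (y : ℝ) :
      ((2 * π * η) ^ 2 + (2 * π * y) ^ 2) / (2 * π * η) ^ 2 = (y ^ 2 + η ^ 2) / η ^ 2 := by
    field_simp
    ring
  rw [hscale, hscale, log_div (by positivity) (by positivity),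
    log_div (by positivity) (by positivity), log_div (by positivity) (by positivity)]
  ring
end

section
/- Let Ψ: (-1,1) → ℝ be any function and define K_Ψ(x,y) = [ cos(Ψ(x)) cos(Ψ(y) - arccos(y)) - cos(Ψ(y)) cos(Ψ(x) - arccos(x)) ] / ( π (1-x²)^{1/4} (1-y²)^{1/4} (x-y) ) for x ≠ y in (-1,1). Then for every ε ∈ (0,1) there is a constant C_ε, independent of Ψ, such that for all x, y ∈ (-1+ε, 1-ε) with x ≠ y: | K_Ψ(x,y) - sin(Ψ(y) - Ψ(x)) / (π (x-y)) | ≤ C_ε. -/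
set_option maxHeartbeats 800000


open Real

/-- For every ε ∈ (0,1) there is a constant C_ε, independent of the phase Ψ, such that
for all x, y ∈ (−1+ε, 1−ε) with x ≠ y, the kernel
K_Ψ(x,y) = [cos Ψ(x) cos(Ψ(y) − arccos y) − cos Ψ(y) cos(Ψ(x) − arccos x)]
              /(π (1−x²)^{1/4} (1−y²)^{1/4} (x−y))
satisfies |K_Ψ(x,y) − sin(Ψ(y) − Ψ(x))/(π(x−y))| ≤ C_ε. -/
theorem kernel_phase_approx (ε : ℝ) (hε : ε ∈ Set.Ioo (0 : ℝ) 1) :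
    ∃ C : ℝ, ∀ Ψ : ℝ → ℝ, ∀ x y : ℝ,
      x ∈ Set.Ioo (-1 + ε) (1 - ε) → y ∈ Set.Ioo (-1 + ε) (1 - ε) → x ≠ y →
      |(Real.cos (Ψ x) * Real.cos (Ψ y - Real.arccos y)
          - Real.cos (Ψ y) * Real.cos (Ψ x - Real.arccos x)) /
            (π * (1 - x ^ 2) ^ ((1 : ℝ) / 4) * (1 - y ^ 2) ^ ((1 : ℝ) / 4) * (x - y))
        - Real.sin (Ψ y - Ψ x) / (π * (x - y))| ≤ C := by
  obtain ⟨hε0, hε1⟩ := hε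
  refine ⟨3 / ε, fun Ψ x y hx hy hxy => ?_⟩
  obtain ⟨hx1, hx2⟩ := hx
  obtain ⟨hy1, hy2⟩ := hy
  have ha : ε < 1 - x ^ 2 := by nlinarith
  have hb : ε < 1 - y ^ 2 := by nlinarith
  have ha0 : (0:ℝ) < 1 - x ^ 2 := lt_trans hε0 ha
  have hb0 : (0:ℝ) < 1 - y ^ 2 := lt_trans hε0 hb
  set p := (1 - x ^ 2) ^ ((1:ℝ)/4) with hpdef
  set q := (1 - y ^ 2) ^ ((1:ℝ)/4) with hqdef
  have hp0 : 0 < p := Real.rpow_pos_of_pos ha0 _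
  have hq0 : 0 < q := Real.rpow_pos_of_pos hb0 _
  have hp4 : p ^ 4 = 1 - x ^ 2 := by
    rw [hpdef, ← Real.rpow_natCast ((1 - x ^ 2) ^ ((1:ℝ)/4)) 4, ← Real.rpow_mul ha0.le]
    norm_num
  have hq4 : q ^ 4 = 1 - y ^ 2 := by
    rw [hqdef, ← Real.rpow_natCast ((1 - y ^ 2) ^ ((1:ℝ)/4)) 4, ← Real.rpow_mul hb0.le]
    norm_num
  set e4 := ε ^ ((1:ℝ)/4) with he4def
  have he40 : 0 < e4 := Real.rpow_pos_of_pos hε0 _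
  have hpe : e4 ≤ p := Real.rpow_le_rpow hε0.le ha.le (by norm_num)
  have hqe : e4 ≤ q := Real.rpow_le_rpow hε0.le hb.le (by norm_num)
  have he2 : ε ≤ e4 * e4 := by
    have h : e4 * e4 = ε ^ ((1:ℝ)/2) := by
      rw [he4def, ← Real.rpow_add hε0]; norm_num
    rw [h]
    calc ε = ε ^ (1:ℝ) := (Real.rpow_one ε).symm
    _ ≤ ε ^ ((1:ℝ)/2) := Real.rpow_le_rpow_of_exponent_ge hε0 hε1.le (by norm_num)
  have he3 : e4 ^ 3 * e4 = ε := by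
    rw [he4def, ← Real.rpow_natCast (ε ^ ((1:ℝ)/4)) 3, ← Real.rpow_mul hε0.le,
      ← Real.rpow_add hε0]
    norm_num
  have hcxa : Real.cos (Ψ x - Real.arccos x)
      = x * Real.cos (Ψ x) + p ^ 2 * Real.sin (Ψ x) := by
    rw [Real.cos_sub, Real.cos_arccos (by linarith) (by linarith), Real.sin_arccos]
    have hs : Real.sqrt (1 - x ^ 2) = p ^ 2 := by
      rw [← hp4, show p ^ 4 = (p ^ 2) ^ 2 by ring, Real.sqrt_sq (by positivity)]
    rw [hs]; ring
  have hcya : Real.cos (Ψ y - Real.arccos y)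
      = y * Real.cos (Ψ y) + q ^ 2 * Real.sin (Ψ y) := by
    rw [Real.cos_sub, Real.cos_arccos (by linarith) (by linarith), Real.sin_arccos]
    have hs : Real.sqrt (1 - y ^ 2) = q ^ 2 := by
      rw [← hq4, show q ^ 4 = (q ^ 2) ^ 2 by ring, Real.sqrt_sq (by positivity)]
    rw [hs]; ring
  have hsub : Real.sin (Ψ y - Ψ x)
      = Real.sin (Ψ y) * Real.cos (Ψ x) - Real.cos (Ψ y) * Real.sin (Ψ x) :=
    Real.sin_sub _ _
  set cx := Real.cos (Ψ x) with hcx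
  set sx := Real.sin (Ψ x) with hsx
  set cy := Real.cos (Ψ y) with hcy
  set sy := Real.sin (Ψ y) with hsy
  have hcx1 : |cx| ≤ 1 := Real.abs_cos_le_one _
  have hcy1 : |cy| ≤ 1 := Real.abs_cos_le_one _
  have hsx1 : |sx| ≤ 1 := Real.abs_sin_le_one _
  have hsy1 : |sy| ≤ 1 := Real.abs_sin_le_one _
  have hxy' : x - y ≠ 0 := sub_ne_zero.mpr hxy
  have hxyabs : 0 < |x - y| := abs_pos.mpr hxy'
  have hpi : (0:ℝ) < π := Real.pi_pos
  have hpi1 : (1:ℝ) ≤ π := by linarith [Real.pi_gt_three]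
  -- key difference estimate: |p - q| * e4^3 ≤ |x - y|
  have hdq : |p - q| * e4 ^ 3 ≤ |x - y| := by
    have hsumnn : (0:ℝ) ≤ p ^ 3 + p ^ 2 * q + p * q ^ 2 + q ^ 3 := by positivity
    have h4 : |p ^ 4 - q ^ 4| = |p - q| * (p ^ 3 + p ^ 2 * q + p * q ^ 2 + q ^ 3) := by
      rw [show p ^ 4 - q ^ 4 = (p - q) * (p ^ 3 + p ^ 2 * q + p * q ^ 2 + q ^ 3) by ring,
        abs_mul]
      rw [abs_of_nonneg hsumnn]
    have h5 : |p ^ 4 - q ^ 4| ≤ 2 * |x - y| := by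
      rw [hp4, hq4, show (1 - x ^ 2) - (1 - y ^ 2) = (x - y) * (-(y + x)) by ring, abs_mul]
      have h6 : |(-(y + x))| ≤ 2 := by
        rw [abs_le]; constructor <;> nlinarith
      calc |x - y| * |(-(y + x))| ≤ |x - y| * 2 :=
            mul_le_mul_of_nonneg_left h6 (abs_nonneg _)
      _ = 2 * |x - y| := mul_comm _ _
    have hcube : e4 ^ 3 ≤ p ^ 3 := by gcongr
    have hcube' : e4 ^ 3 ≤ q ^ 3 := by gcongr
    have hppq : (0:ℝ) ≤ p ^ 2 * q := by positivity
    have hpqq : (0:ℝ) ≤ p * q ^ 2 := by positivity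
    have hsum : 2 * e4 ^ 3 ≤ p ^ 3 + p ^ 2 * q + p * q ^ 2 + q ^ 3 := by linarith
    have h7 : |p - q| * (2 * e4 ^ 3) ≤ 2 * |x - y| := by
      calc |p - q| * (2 * e4 ^ 3) ≤ |p - q| * (p ^ 3 + p ^ 2 * q + p * q ^ 2 + q ^ 3) :=
            mul_le_mul_of_nonneg_left hsum (abs_nonneg _)
      _ = |p ^ 4 - q ^ 4| := h4.symm
      _ ≤ 2 * |x - y| := h5
    have h8 : |p - q| * (2 * e4 ^ 3) = 2 * (|p - q| * e4 ^ 3) := by ring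
    linarith [h8 ▸ h7]
  -- decomposition
  have hdecomp :
      (cx * (y * cy + q ^ 2 * sy) - cy * (x * cx + p ^ 2 * sx)) / (π * p * q * (x - y))
        - (sy * cx - cy * sx) / (π * (x - y))
      = -(cx * cy) / (π * (p * q))
        + (q - p) * (cx * sy) / (π * p * (x - y))
        - (p - q) * (cy * sx) / (π * q * (x - y)) := by
    field_simp
    ring
  rw [hcxa, hcya, hsub, hdecomp]
  have h1 : |(-(cx * cy)) / (π * (p * q))| ≤ 1 / ε := by
    rw [abs_div, abs_of_pos (show (0:ℝ) < π * (p * q) by positivity),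
      div_le_div_iff₀ (by positivity) hε0]
    have h1a : |(-(cx * cy))| ≤ 1 := by
      rw [abs_neg, abs_mul]
      exact mul_le_one₀ hcx1 (abs_nonneg _) hcy1
    have hpq : e4 * e4 ≤ p * q := mul_le_mul hpe hqe he40.le hp0.le
    calc |(-(cx * cy))| * ε ≤ 1 * ε := mul_le_mul_of_nonneg_right h1a hε0.le
    _ = ε := one_mul ε
    _ ≤ e4 * e4 := he2
    _ ≤ p * q := hpq
    _ ≤ π * (p * q) := le_mul_of_one_le_left (by positivity) hpi1
    _ = 1 * (π * (p * q)) := (one_mul _).symm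
  have h2 : |(q - p) * (cx * sy) / (π * p * (x - y))| ≤ 1 / ε := by
    have habs : |(q - p) * (cx * sy) / (π * p * (x - y))|
        = |q - p| * |cx * sy| / (π * p * |x - y|) := by
      rw [abs_div]
      congr 1
      · exact abs_mul _ _
      · rw [abs_mul, abs_of_pos (mul_pos hpi hp0)]
    rw [habs, div_le_div_iff₀ (by positivity) hε0]
    have hqp : |q - p| = |p - q| := abs_sub_comm q p
    have hb1 : |cx * sy| ≤ 1 := by
      rw [abs_mul]; exact mul_le_one₀ hcx1 (abs_nonneg _) hsy1
    have step : |p - q| * ε ≤ p * |x - y| := by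
      calc |p - q| * ε = (|p - q| * e4 ^ 3) * e4 := by rw [mul_assoc, he3]
      _ ≤ |x - y| * e4 := mul_le_mul_of_nonneg_right hdq he40.le
      _ ≤ |x - y| * p := mul_le_mul_of_nonneg_left hpe hxyabs.le
      _ = p * |x - y| := mul_comm _ _
    calc |q - p| * |cx * sy| * ε ≤ |q - p| * 1 * ε := by
          apply mul_le_mul_of_nonneg_right _ hε0.le
          exact mul_le_mul_of_nonneg_left hb1 (abs_nonneg _)
    _ = |p - q| * ε := by rw [hqp]; ring
    _ ≤ p * |x - y| := step
    _ ≤ π * p * |x - y| := by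
          calc p * |x - y| ≤ π * (p * |x - y|) :=
                le_mul_of_one_le_left (by positivity) hpi1
          _ = π * p * |x - y| := by ring
    _ = 1 * (π * p * |x - y|) := (one_mul _).symm
  have h3 : |(p - q) * (cy * sx) / (π * q * (x - y))| ≤ 1 / ε := by
    have habs : |(p - q) * (cy * sx) / (π * q * (x - y))|
        = |p - q| * |cy * sx| / (π * q * |x - y|) := by
      rw [abs_div]
      congr 1
      · exact abs_mul _ _
      · rw [abs_mul, abs_of_pos (mul_pos hpi hq0)]
    rw [habs, div_le_div_iff₀ (by positivity) hε0]
    have hb1 : |cy * sx| ≤ 1 := by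
      rw [abs_mul]; exact mul_le_one₀ hcy1 (abs_nonneg _) hsx1
    have step : |p - q| * ε ≤ q * |x - y| := by
      calc |p - q| * ε = (|p - q| * e4 ^ 3) * e4 := by rw [mul_assoc, he3]
      _ ≤ |x - y| * e4 := mul_le_mul_of_nonneg_right hdq he40.le
      _ ≤ |x - y| * q := mul_le_mul_of_nonneg_left hqe hxyabs.le
      _ = q * |x - y| := mul_comm _ _
    calc |p - q| * |cy * sx| * ε ≤ |p - q| * 1 * ε := by
          apply mul_le_mul_of_nonneg_right _ hε0.le
          exact mul_le_mul_of_nonneg_left hb1 (abs_nonneg _)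
    _ = |p - q| * ε := by ring
    _ ≤ q * |x - y| := step
    _ ≤ π * q * |x - y| := by
          have h9 : q * |x - y| ≤ π * (q * |x - y|) :=
            le_mul_of_one_le_left (by positivity) hpi1
          calc q * |x - y| ≤ π * (q * |x - y|) := h9
          _ = π * q * |x - y| := by ring
    _ = 1 * (π * q * |x - y|) := (one_mul _).symm
  have htri : |(-(cx * cy)) / (π * (p * q))
        + (q - p) * (cx * sy) / (π * p * (x - y))
        - (p - q) * (cy * sx) / (π * q * (x - y))|
      ≤ |(-(cx * cy)) / (π * (p * q))|
        + |(q - p) * (cx * sy) / (π * p * (x - y))|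
        + |(p - q) * (cy * sx) / (π * q * (x - y))| := by
    calc _ ≤ |(-(cx * cy)) / (π * (p * q))
        + (q - p) * (cx * sy) / (π * p * (x - y))|
        + |(p - q) * (cy * sx) / (π * q * (x - y))| := abs_sub _ _
    _ ≤ _ := by gcongr; exact abs_add_le _ _
  have h3e : (3:ℝ) / ε = 1 / ε + 1 / ε + 1 / ε := by ring
  rw [h3e]
  linarith [htri, h1, h2, h3]
end

section
/- The correlation kernel of the Chebyshev orthogonal polynomial ensemble, K_N^{ω₀}(x,y) = [ sin((N+1) arccos x) sin(N arccos y) - sin((N+1) arccos y) sin(N arccos x) ] / ( π (1-x²)^{1/4} (1-y²)^{1/4} (x-y) ), satisfies: for every ε ∈ (0,1) there is C_ε such that for all x, y ∈ (-1+ε, 1-ε), x ≠ y, and all N ≥ 1, | K_N^{ω₀}(x,y) - sin(N(arccos y - arccos x)) / (π (x-y)) | ≤ C_ε, i.e. the difference is bounded by a constant C_ε independent of N. -/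
open Real

set_option maxHeartbeats 2000000 in
/-- The Chebyshev correlation kernel
K_N^{ω₀}(x,y) = [sin((N+1) arccos x) sin(N arccos y) − sin((N+1) arccos y) sin(N arccos x)]
                 /(π (1−x²)^{1/4} (1−y²)^{1/4} (x−y))
satisfies: for every ε ∈ (0,1) there exists C_ε such that for all N ≥ 1 and all
x, y ∈ (−1+ε, 1−ε) with x ≠ y,
|K_N^{ω₀}(x,y) − sin(N(arccos y − arccos x))/(π(x−y))| ≤ C_ε, uniformly in N. -/
theorem chebyshev_kernel_sine_asymptotics (ε : ℝ) (hε : ε ∈ Set.Ioo (0 : ℝ) 1) :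
    ∃ C : ℝ, ∀ N : ℕ, 1 ≤ N → ∀ x y : ℝ,
      x ∈ Set.Ioo (-1 + ε) (1 - ε) → y ∈ Set.Ioo (-1 + ε) (1 - ε) → x ≠ y →
      |(Real.sin ((N + 1) * Real.arccos x) * Real.sin (N * Real.arccos y)
          - Real.sin ((N + 1) * Real.arccos y) * Real.sin (N * Real.arccos x)) /
            (π * (1 - x ^ 2) ^ ((1 : ℝ) / 4) * (1 - y ^ 2) ^ ((1 : ℝ) / 4) * (x - y))
        - Real.sin (N * (Real.arccos y - Real.arccos x)) / (π * (x - y))| ≤ C := by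
  obtain ⟨hε0, hε1⟩ := hε
  have hπ : (0:ℝ) < π := Real.pi_pos
  have hsε : (0:ℝ) < Real.sqrt ε := Real.sqrt_pos.mpr hε0
  have hsε2 : Real.sqrt ε ^ 2 = ε := Real.sq_sqrt hε0.le
  refine ⟨1 / (π * Real.sqrt ε) + 2 / (π * ε), ?_⟩
  intro N _ x y hx hy hxy
  obtain ⟨hx1, hx2⟩ := hx
  obtain ⟨hy1, hy2⟩ := hy
  have hx2' : ε ≤ 1 - x^2 := by nlinarith
  have hy2' : ε ≤ 1 - y^2 := by nlinarith
  set θ := Real.arccos x with hθ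
  set φ := Real.arccos y with hφ
  set a := Real.sqrt (1 - x^2) with hadef
  set b := Real.sqrt (1 - y^2) with hbdef
  have ha0 : 0 < a := Real.sqrt_pos.mpr (by linarith)
  have hb0 : 0 < b := Real.sqrt_pos.mpr (by linarith)
  have ha2 : a^2 = 1 - x^2 := Real.sq_sqrt (by linarith)
  have hb2 : b^2 = 1 - y^2 := Real.sq_sqrt (by linarith)
  have haε : Real.sqrt ε ≤ a := Real.sqrt_le_sqrt hx2'
  have hbε : Real.sqrt ε ≤ b := Real.sqrt_le_sqrt hy2'
  set p := (1 - x^2) ^ ((1:ℝ)/4) with hpdef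
  set q := (1 - y^2) ^ ((1:ℝ)/4) with hqdef
  have hp0 : 0 < p := Real.rpow_pos_of_pos (by linarith) _
  have hq0 : 0 < q := Real.rpow_pos_of_pos (by linarith) _
  have hp2 : p^2 = a := by
    rw [hpdef, hadef, ← Real.rpow_natCast _ 2, ← Real.rpow_mul (by linarith),
      Real.sqrt_eq_rpow]
    norm_num
  have hq2 : q^2 = b := by
    rw [hqdef, hbdef, ← Real.rpow_natCast _ 2, ← Real.rpow_mul (by linarith),
      Real.sqrt_eq_rpow]
    norm_num
  have hpq0 : 0 < p * q := mul_pos hp0 hq0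
  have hpqε : Real.sqrt ε ≤ p * q := by
    have hεab : ε ≤ a * b := by
      have h1 : Real.sqrt ε * Real.sqrt ε ≤ a * b := mul_le_mul haε hbε hsε.le ha0.le
      have h2 : Real.sqrt ε * Real.sqrt ε = ε := Real.mul_self_sqrt hε0.le
      linarith
    have h' : (Real.sqrt ε)^2 ≤ (p * q)^2 := by
      rw [hsε2, mul_pow, hp2, hq2]; exact hεab
    have h'' := Real.sqrt_le_sqrt h'
    rwa [Real.sqrt_sq hsε.le, Real.sqrt_sq hpq0.le] at h''
  have hxy0 : (0:ℝ) < |x - y| := abs_pos.mpr (sub_ne_zero.mpr hxy)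
  have hcosθ : Real.cos θ = x := Real.cos_arccos (by linarith) (by linarith)
  have hcosφ : Real.cos φ = y := Real.cos_arccos (by linarith) (by linarith)
  have hsinθ : Real.sin θ = a := Real.sin_arccos x
  have hsinφ : Real.sin φ = b := Real.sin_arccos y
  have e1 : Real.sin ((N + 1) * θ) = Real.sin (N * θ) * x + Real.cos (N * θ) * a := by
    have h : ((N:ℝ) + 1) * θ = N * θ + θ := by ring
    rw [h, Real.sin_add, hcosθ, hsinθ]
  have e2 : Real.sin ((N + 1) * φ) = Real.sin (N * φ) * y + Real.cos (N * φ) * b := by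
    have h : ((N:ℝ) + 1) * φ = N * φ + φ := by ring
    rw [h, Real.sin_add, hcosφ, hsinφ]
  have e3 : Real.sin ((N:ℝ) * (φ - θ))
      = Real.sin (N * φ) * Real.cos (N * θ) - Real.cos (N * φ) * Real.sin (N * θ) := by
    rw [mul_sub, Real.sin_sub]
  have key : (Real.sin ((N + 1) * θ) * Real.sin (N * φ)
          - Real.sin ((N + 1) * φ) * Real.sin (N * θ)) / (π * p * q * (x - y))
        - Real.sin ((N:ℝ) * (φ - θ)) / (π * (x - y))
      = Real.sin (N * θ) * Real.sin (N * φ) / (π * (p * q))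
        + ((a - p * q) * Real.cos (N * θ) * Real.sin (N * φ)
            - (b - p * q) * Real.cos (N * φ) * Real.sin (N * θ)) / (π * (p * q) * (x - y)) := by
    rw [e1, e2, e3]
    have hxy' : x - y ≠ 0 := sub_ne_zero.mpr hxy
    field_simp
    ring
  rw [key]
  have hS1 : |Real.sin (N * θ) * Real.sin (N * φ) / (π * (p * q))| ≤ 1 / (π * Real.sqrt ε) := by
    rw [abs_div, abs_of_pos (mul_pos hπ hpq0)]
    apply div_le_div₀ (by positivity) ?_ (by positivity) ?_
    · rw [abs_mul]
      exact mul_le_one₀ (Real.abs_sin_le_one _) (abs_nonneg _) (Real.abs_sin_le_one _)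
    · exact mul_le_mul_of_nonneg_left hpqε hπ.le
  have habpq : |a - p * q| ≤ |a - b| := by
    have e : a - p * q = p * (p - q) := by rw [← hp2]; ring
    have e' : a - b = (p + q) * (p - q) := by rw [← hp2, ← hq2]; ring
    rw [e, e', abs_mul, abs_mul, abs_of_pos hp0, abs_of_pos (by linarith : (0:ℝ) < p + q)]
    exact mul_le_mul_of_nonneg_right (by linarith) (abs_nonneg _)
  have hbbpq : |b - p * q| ≤ |a - b| := by
    have e : b - p * q = q * (q - p) := by rw [← hq2]; ring
    have e' : a - b = (p + q) * (p - q) := by rw [← hp2, ← hq2]; ring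
    have e'' : |a - b| = (p + q) * |p - q| := by
      rw [e', abs_mul, abs_of_pos (by linarith : (0:ℝ) < p + q)]
    rw [e, e'', abs_mul, abs_of_pos hq0, abs_sub_comm]
    exact mul_le_mul_of_nonneg_right (by linarith) (abs_nonneg _)
  have hab : |a - b| * Real.sqrt ε ≤ |x - y| := by
    have keyab : |a - b| * (a + b) = |x - y| * |x + y| := by
      have h1 : (a - b) * (a + b) = -((x - y) * (x + y)) := by
        linear_combination ha2 - hb2
      calc |a - b| * (a + b) = |(a - b) * (a + b)| := by
            rw [abs_mul, abs_of_pos (by linarith : (0:ℝ) < a + b)]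
        _ = |(x - y) * (x + y)| := by rw [h1, abs_neg]
        _ = |x - y| * |x + y| := abs_mul _ _
    have hxysum : |x + y| ≤ 2 := by
      rw [abs_le]
      constructor <;> linarith
    have h2 : |a - b| * (2 * Real.sqrt ε) ≤ |a - b| * (a + b) :=
      mul_le_mul_of_nonneg_left (by linarith) (abs_nonneg _)
    have h3 : |x - y| * |x + y| ≤ |x - y| * 2 :=
      mul_le_mul_of_nonneg_left hxysum (abs_nonneg _)
    linarith [h2, h3, keyab]
  have hnum : |(a - p * q) * Real.cos (N * θ) * Real.sin (N * φ)
      - (b - p * q) * Real.cos (N * φ) * Real.sin (N * θ)| ≤ |a - p*q| + |b - p*q| := by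
    calc |(a - p * q) * Real.cos (N * θ) * Real.sin (N * φ)
        - (b - p * q) * Real.cos (N * φ) * Real.sin (N * θ)|
        ≤ |(a - p * q) * Real.cos (N * θ) * Real.sin (N * φ)|
          + |(b - p * q) * Real.cos (N * φ) * Real.sin (N * θ)| := abs_sub _ _
      _ ≤ |a - p*q| + |b - p*q| := by
          have u1 : |(a - p * q) * Real.cos ((N:ℝ) * θ) * Real.sin ((N:ℝ) * φ)| ≤ |a - p*q| := by
            rw [abs_mul, abs_mul]
            calc |a - p*q| * |Real.cos ((N:ℝ) * θ)| * |Real.sin ((N:ℝ) * φ)|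
                ≤ |a - p*q| * 1 * 1 := by
                  gcongr
                  · exact Real.abs_cos_le_one _
                  · exact Real.abs_sin_le_one _
              _ = |a - p*q| := by ring
          have u2 : |(b - p * q) * Real.cos ((N:ℝ) * φ) * Real.sin ((N:ℝ) * θ)| ≤ |b - p*q| := by
            rw [abs_mul, abs_mul]
            calc |b - p*q| * |Real.cos ((N:ℝ) * φ)| * |Real.sin ((N:ℝ) * θ)|
                ≤ |b - p*q| * 1 * 1 := by
                  gcongr
                  · exact Real.abs_cos_le_one _
                  · exact Real.abs_sin_le_one _
              _ = |b - p*q| := by ring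
          linarith
  have hS2 : |((a - p * q) * Real.cos (N * θ) * Real.sin (N * φ)
      - (b - p * q) * Real.cos (N * φ) * Real.sin (N * θ)) / (π * (p * q) * (x - y))|
      ≤ 2 / (π * ε) := by
    rw [abs_div, abs_mul, abs_of_pos (mul_pos hπ hpq0)]
    rw [div_le_div_iff₀ (by positivity) (by positivity)]
    -- |num| * (π * ε) ≤ 2 * (π * (p*q) * |x - y|)
    set M := |(a - p * q) * Real.cos ((N:ℝ) * θ) * Real.sin ((N:ℝ) * φ)
        - (b - p * q) * Real.cos ((N:ℝ) * φ) * Real.sin ((N:ℝ) * θ)| with hMdef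
    have h1 : M * Real.sqrt ε ≤ 2 * |x - y| := by
      have v1 : M ≤ 2 * |a - b| := by linarith [hnum, habpq, hbbpq]
      have v2 : M * Real.sqrt ε ≤ (2 * |a - b|) * Real.sqrt ε :=
        mul_le_mul_of_nonneg_right v1 hsε.le
      linarith [v2, hab]
    have s2 : M * (π * ε) = (π * Real.sqrt ε) * (M * Real.sqrt ε) := by
      linear_combination (-(M * π)) * hsε2
    have s3 : (π * Real.sqrt ε) * (M * Real.sqrt ε) ≤ (π * Real.sqrt ε) * (2 * |x - y|) :=
      mul_le_mul_of_nonneg_left h1 (by positivity)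
    have s4 : (π * Real.sqrt ε) * (2 * |x - y|) ≤ (π * (p * q)) * (2 * |x - y|) :=
      mul_le_mul_of_nonneg_right (mul_le_mul_of_nonneg_left hpqε hπ.le) (by positivity)
    linarith [s2, s3, s4]
  calc |Real.sin (N * θ) * Real.sin (N * φ) / (π * (p * q))
      + ((a - p * q) * Real.cos (N * θ) * Real.sin (N * φ)
          - (b - p * q) * Real.cos (N * φ) * Real.sin (N * θ)) / (π * (p * q) * (x - y))|
      ≤ |Real.sin (N * θ) * Real.sin (N * φ) / (π * (p * q))|
        + |((a - p * q) * Real.cos (N * θ) * Real.sin (N * φ)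
          - (b - p * q) * Real.cos (N * φ) * Real.sin (N * θ)) / (π * (p * q) * (x - y))| :=
        abs_add_le _ _
    _ ≤ 1 / (π * Real.sqrt ε) + 2 / (π * ε) := add_le_add hS1 hS2
end
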